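/- Let (u,M) and (u1,M1) be Jost pairs, let a_1>0 and b_1 be real, and suppose u1(z) = a_1 z^{-1} u(z) M(z) and M(z)^{-1} = z + z^{-1} - b_1 - a_1^2 M1(z) as identities of meromorphic functions. If z_0 with |z_0|>1 is not a pole of u1 and both z_0 and 1/z_0 are poles of M1, then z_0 is a pole of u. -/

import Mathlib

open Filter Topology Complex

/-- `f` has a pole at `z`: it is meromorphic at `z` with negative order. -/
def IsPoleAt (f : ℂ → ℂ) (z : ℂ) : Prop :=
  ∃ h : MeromorphicAt f z, meromorphicOrderAt f z < 0

/-- A *Jost pair* `(u, M)`: `u` and `M` are meromorphic on `ℂ \ {0}`, real on `ℝ`,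
`u` has neither zeros nor poles on the unit circle, every zero of `u` in the open unit
disk is real and simple, every pole of `M` in the open unit disk is real and simple,
the zeros of `u` in the disk coincide exactly with the poles of `M` in the disk, and
`(M(z) - M(1/z)) u(1/z) u(z) = z - z⁻¹` as an identity of meromorphic functions on
`ℂ \ {0}` (i.e. pointwise wherever all functions involved are analytic). -/
structure IsJostPair (u M : ℂ → ℂ) : Prop where
  mero_u : ∀ z : ℂ, z ≠ 0 → MeromorphicAt u z
  mero_M : ∀ z : ℂ, z ≠ 0 → MeromorphicAt M z
  real_u : ∀ z : ℂ, z ≠ 0 → AnalyticAt ℂ u z → AnalyticAt ℂ u (starRingEnd ℂ z) →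
    starRingEnd ℂ (u (starRingEnd ℂ z)) = u z
  real_M : ∀ z : ℂ, z ≠ 0 → AnalyticAt ℂ M z → AnalyticAt ℂ M (starRingEnd ℂ z) →
    starRingEnd ℂ (M (starRingEnd ℂ z)) = M z
  circle_u : ∀ z : ℂ, ‖z‖ = 1 → AnalyticAt ℂ u z ∧ u z ≠ 0
  zeros_u_real_simple : ∀ z : ℂ, z ≠ 0 → ‖z‖ < 1 →
    AnalyticAt ℂ u z → u z = 0 → z.im = 0 ∧ deriv u z ≠ 0
  poles_M_real_simple : ∀ z : ℂ, z ≠ 0 → ‖z‖ < 1 → IsPoleAt M z →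
    z.im = 0 ∧ ∃ h : MeromorphicAt M z, meromorphicOrderAt M z = (-1 : ℤ)
  zeros_eq_poles : ∀ z : ℂ, z ≠ 0 → ‖z‖ < 1 →
    ((AnalyticAt ℂ u z ∧ u z = 0) ↔ IsPoleAt M z)
  func_eq : ∀ z : ℂ, z ≠ 0 → AnalyticAt ℂ u z → AnalyticAt ℂ u z⁻¹ →
    AnalyticAt ℂ M z → AnalyticAt ℂ M z⁻¹ →
    (M z - M z⁻¹) * u z⁻¹ * u z = z - z⁻¹

/-- `z₀` is a *noncanonical zero* of the Jost pair `(u, M)`: a zero of `u` in the open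
unit disk such that `1/z₀` is not a pole of `u` and
`lim_{z → z₀} (z - z₀) M(z) ≠ -(z₀ - z₀⁻¹) [u'(z₀) u(1/z₀)]⁻¹`, this inequality being
deemed to hold when `u(1/z₀) = 0`. -/
def IsNoncanonicalZero (u M : ℂ → ℂ) (z₀ : ℂ) : Prop :=
  z₀ ≠ 0 ∧ ‖z₀‖ < 1 ∧ AnalyticAt ℂ u z₀ ∧ u z₀ = 0 ∧
    ¬ IsPoleAt u z₀⁻¹ ∧
    (u z₀⁻¹ = 0 ∨
      ¬ Tendsto (fun z => (z - z₀) * M z) (𝓝[≠] z₀)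
          (𝓝 (-(z₀ - z₀⁻¹) * (deriv u z₀ * u z₀⁻¹)⁻¹)))

/-- `P₂(u,M)`: the set of inverses of noncanonical zeros of `(u, M)`. -/
def P2 (u M : ℂ → ℂ) : Set ℂ :=
  {w | ∃ z₀ : ℂ, IsNoncanonicalZero u M z₀ ∧ w = z₀⁻¹}

/-- `P₁(u)`: the set of poles of `u` in `{|z| > 1}`. -/
def P1 (u : ℂ → ℂ) : Set ℂ :=
  {z | 1 < ‖z‖ ∧ IsPoleAt u z}

/-- The coefficient stripping relations `u₁(z) = a₁ z⁻¹ u(z) M(z)` and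
`M(z)⁻¹ = z + z⁻¹ - b₁ - a₁² M₁(z)`, as identities of meromorphic functions on
`ℂ \ {0}` (i.e. pointwise wherever all functions involved are analytic and, for the
second identity, `M` is nonvanishing). -/
def StrippingRelation (u M u1 M1 : ℂ → ℂ) (a₁ b₁ : ℝ) : Prop :=
  (∀ z : ℂ, z ≠ 0 → AnalyticAt ℂ u z → AnalyticAt ℂ M z → AnalyticAt ℂ u1 z →
    u1 z = (a₁ : ℂ) * z⁻¹ * (u z * M z)) ∧
  (∀ z : ℂ, z ≠ 0 → AnalyticAt ℂ M z → M z ≠ 0 → AnalyticAt ℂ M1 z →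
    (M z)⁻¹ = z + z⁻¹ - (b₁ : ℂ) - (a₁ : ℂ) ^ 2 * M1 z)

/-! Compare orders at `z₀`. Stripping gives `ord u₁ = ord u + ord M`, and since `M₁` has a pole
at `z₀`, the relation `1 / M = z + 1/z - b₁ - a₁² M₁` gives `ord M = -ord M₁`. At `z₀`, where
`z - 1/z ≠ 0`, the functional equation of `(u₁, M₁)` gives
`ord (M₁ - M₁ ∘ inv) + ord_{1/z₀} u₁ + ord u₁ = 0`. Here `ord_{1/z₀} u₁ > 0`, since the pole
`1/z₀` of `M₁` lies in the disk and is a zero of `u₁`; and `ord (M₁ - M₁ ∘ inv) ≥ ord M₁`, since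
the pole at `1/z₀` is simple. Hence `ord u₁ + ord M₁ < 0`, that is, `ord u < 0`. -/

theorem tendsto_inv₀_nhdsNE {G₀ : Type*} [GroupWithZero G₀] [TopologicalSpace G₀]
    [ContinuousInv₀ G₀] {x : G₀} (hx : x ≠ 0) : Tendsto Inv.inv (𝓝[≠] x) (𝓝[≠] x⁻¹) :=
  tendsto_nhdsWithin_of_tendsto_nhds_of_eventually_within _
    ((tendsto_inv₀ hx).mono_left nhdsWithin_le_nhds)
    (eventually_nhdsWithin_of_forall fun _ hy => inv_injective.ne hy)

section inversion

variable {𝕜 E : Type*} [NontriviallyNormedField 𝕜] [NormedAddCommGroup E] [NormedSpace 𝕜 E]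
  {f : 𝕜 → E} {x : 𝕜}

theorem MeromorphicAt.comp_inv (hf : MeromorphicAt f x⁻¹) (hx : x ≠ 0) :
    MeromorphicAt (fun z => f z⁻¹) x :=
  hf.comp_analyticAt (analyticAt_inv hx)

theorem meromorphicOrderAt_comp_inv [CompleteSpace 𝕜] [CharZero 𝕜] (hx : x ≠ 0) :
    meromorphicOrderAt (fun z => f z⁻¹) x = meromorphicOrderAt f x⁻¹ :=
  meromorphicOrderAt_comp_of_deriv_ne_zero (g := Inv.inv) (analyticAt_inv hx)
    (by simp [hx])

end inversion

namespace IsJostPair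

variable {u M : ℂ → ℂ} {z : ℂ}

theorem meromorphicOrderAt_pos_of_isPoleAt (h : IsJostPair u M) (hz : z ≠ 0) (hz1 : ‖z‖ < 1)
    (hp : IsPoleAt M z) : 0 < meromorphicOrderAt u z := by
  obtain ⟨hu, hu0⟩ := (h.zeros_eq_poles z hz hz1).2 hp
  refine (tendsto_zero_iff_meromorphicOrderAt_pos hu.meromorphicAt).1 ?_
  exact hu0 ▸ hu.continuousAt.tendsto.mono_left nhdsWithin_le_nhds

theorem meromorphicOrderAt_func_eq (h : IsJostPair u M) (hz : z ≠ 0) (hz1 : z ^ 2 ≠ 1) :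
    meromorphicOrderAt (M - fun w => M w⁻¹) z + meromorphicOrderAt u z⁻¹ +
      meromorphicOrderAt u z = 0 := by
  have hzi : z⁻¹ ≠ 0 := inv_ne_zero hz
  have hMi := (h.mero_M _ hzi).comp_inv hz
  have hui := (h.mero_u _ hzi).comp_inv hz
  have hrhs : meromorphicOrderAt (fun w : ℂ => w - w⁻¹) z = 0 := by
    have han : AnalyticAt ℂ (fun w : ℂ => w - w⁻¹) z := analyticAt_id.sub (analyticAt_inv hz)
    rw [han.meromorphicNFAt.meromorphicOrderAt_eq_zero_iff, sub_ne_zero]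
    contrapose! hz1
    rw [sq]; nth_rw 2 [hz1]; exact mul_inv_cancel₀ hz
  rw [← meromorphicOrderAt_comp_inv hz, ← meromorphicOrderAt_mul ((h.mero_M z hz).sub hMi) hui,
    ← meromorphicOrderAt_mul (((h.mero_M z hz).sub hMi).mul hui) (h.mero_u z hz), ← hrhs]
  apply meromorphicOrderAt_congr
  have hinv := tendsto_inv₀_nhdsNE hz
  filter_upwards [(h.mero_u z hz).eventually_analyticAt, (h.mero_M z hz).eventually_analyticAt,
    hinv.eventually (h.mero_u _ hzi).eventually_analyticAt,
    hinv.eventually (h.mero_M _ hzi).eventually_analyticAt,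
    eventually_nhdsWithin_of_eventually_nhds (eventually_ne_nhds hz)] with w hu hM hu' hM' hw
  exact h.func_eq w hw hu hu' hM hM'

theorem meromorphicOrderAt_add_lt_zero (h : IsJostPair u M) (hz : 1 < ‖z‖) (hp : IsPoleAt M z)
    (hp' : IsPoleAt M z⁻¹) : meromorphicOrderAt u z + meromorphicOrderAt M z < 0 := by
  have hz0 : z ≠ 0 := norm_pos_iff.1 (one_pos.trans hz)
  have hzi : z⁻¹ ≠ 0 := inv_ne_zero hz0
  have hzi1 : ‖z⁻¹‖ < 1 := by rw [norm_inv]; exact inv_lt_one_of_one_lt₀ hz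
  have hz2 : z ^ 2 ≠ 1 := fun h2 => by
    have := congrArg norm h2
    rw [norm_pow, norm_one, sq] at this
    nlinarith
  obtain ⟨-, -, hsimple⟩ := h.poles_M_real_simple _ hzi hzi1 hp'
  have hpos := h.meromorphicOrderAt_pos_of_isPoleAt hzi hzi1 hp'
  have hsum := h.meromorphicOrderAt_func_eq hz0 hz2
  have hdiff := meromorphicOrderAt_add (h.mero_M z hz0) ((h.mero_M _ hzi).comp_inv hz0).neg
  rw [← sub_eq_add_neg, ← meromorphicOrderAt_neg (f := fun w => M w⁻¹),
    meromorphicOrderAt_comp_inv hz0, hsimple] at hdiff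
  obtain ⟨-, hneg⟩ := hp
  lift meromorphicOrderAt M z to ℤ using hneg.ne_top with a
  lift meromorphicOrderAt (M - fun w => M w⁻¹) z to ℤ using
    (by rintro hd; simp [hd] at hsum) with d
  lift meromorphicOrderAt u z⁻¹ to ℤ using (by rintro hd; simp [hd] at hsum) with p
  lift meromorphicOrderAt u z to ℤ using (by rintro hd; simp [hd] at hsum) with m
  norm_cast at *
  omega

end IsJostPair

namespace StrippingRelation

variable {u M u1 M1 : ℂ → ℂ} {a₁ b₁ : ℝ} {z : ℂ}

theorem meromorphicOrderAt_u1_eq_add (hs : StrippingRelation u M u1 M1 a₁ b₁) (ha : a₁ ≠ 0)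
    (hz : z ≠ 0) (hu : MeromorphicAt u z) (hM : MeromorphicAt M z) (hu1 : MeromorphicAt u1 z) :
    meromorphicOrderAt u1 z = meromorphicOrderAt u z + meromorphicOrderAt M z := by
  have hc : AnalyticAt ℂ (fun w : ℂ => (a₁ : ℂ) * w⁻¹) z :=
    analyticAt_const.mul (analyticAt_inv hz)
  rw [← meromorphicOrderAt_mul hu hM,
    ← meromorphicOrderAt_mul_of_ne_zero (f := u * M) hc (by simp [ha, hz])]
  apply meromorphicOrderAt_congr
  filter_upwards [hu.eventually_analyticAt, hM.eventually_analyticAt, hu1.eventually_analyticAt,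
    eventually_nhdsWithin_of_eventually_nhds (eventually_ne_nhds hz)] with w huw hMw hu1w hw
  exact hs.1 w hw huw hMw hu1w

theorem meromorphicOrderAt_M_add_M1_eq_zero (hs : StrippingRelation u M u1 M1 a₁ b₁)
    (ha : a₁ ≠ 0) (hz : z ≠ 0) (hM : MeromorphicAt M z) (hM1 : MeromorphicAt M1 z)
    (hMtop : meromorphicOrderAt M z ≠ ⊤) (hp : meromorphicOrderAt M1 z < 0) :
    meromorphicOrderAt M z + meromorphicOrderAt M1 z = 0 := by
  have hc : AnalyticAt ℂ (fun w : ℂ => w + w⁻¹ - b₁) z :=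
    (analyticAt_id.add (analyticAt_inv hz)).sub analyticAt_const
  have hpole : meromorphicOrderAt ((fun _ => -(a₁ : ℂ) ^ 2) * M1) z = meromorphicOrderAt M1 z :=
    meromorphicOrderAt_mul_of_ne_zero analyticAt_const (by simp [ha])
  have hinv : meromorphicOrderAt M⁻¹ z = meromorphicOrderAt M1 z := by
    rw [← hpole, ← meromorphicOrderAt_add_eq_left_of_lt hc.meromorphicAt
      (hpole.trans_lt (hp.trans_le hc.meromorphicOrderAt_nonneg))]
    apply meromorphicOrderAt_congr
    filter_upwards [hM.eventually_analyticAt, hM1.eventually_analyticAt,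
      (meromorphicOrderAt_ne_top_iff_eventually_ne_zero hM).1 hMtop,
      eventually_nhdsWithin_of_eventually_nhds (eventually_ne_nhds hz)] with w hMw hM1w hM0 hw
    simp only [Pi.inv_apply, Pi.add_apply, Pi.mul_apply, hs.2 w hw hMw hM0 hM1w]
    ring
  rw [meromorphicOrderAt_inv] at hinv
  rw [← hinv]
  lift meromorphicOrderAt M z to ℤ using hMtop with m
  norm_cast
  omega

end StrippingRelation

theorem pole_of_u_of_P2_of_stripped_general
    (u M u1 M1 : ℂ → ℂ) (h : IsJostPair u M) (h1 : IsJostPair u1 M1)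
    (a₁ b₁ : ℝ) (ha₁ : 0 < a₁) (hstrip : StrippingRelation u M u1 M1 a₁ b₁)
    (z₀ : ℂ) (hz₀ : 1 < ‖z₀‖)
    (hp : IsPoleAt M1 z₀) (hp' : IsPoleAt M1 z₀⁻¹) :
    IsPoleAt u z₀ := by
  have hz : z₀ ≠ 0 := norm_pos_iff.1 (one_pos.trans hz₀)
  have hsum := h1.meromorphicOrderAt_add_lt_zero hz₀ hp hp'
  have hu1 := hstrip.meromorphicOrderAt_u1_eq_add ha₁.ne' hz (h.mero_u z₀ hz) (h.mero_M z₀ hz)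
    (h1.mero_u z₀ hz)
  have hM : meromorphicOrderAt M z₀ + meromorphicOrderAt M1 z₀ = 0 := by
    refine hstrip.meromorphicOrderAt_M_add_M1_eq_zero ha₁.ne' hz (h.mero_M z₀ hz) hp.1 ?_ hp.2
    rintro htop
    simp [hu1, htop] at hsum
  refine ⟨h.mero_u z₀ hz, ?_⟩
  calc meromorphicOrderAt u z₀
      = meromorphicOrderAt u z₀ + (meromorphicOrderAt M z₀ + meromorphicOrderAt M1 z₀) := by
        rw [hM, add_zero]
    _ = meromorphicOrderAt u1 z₀ + meromorphicOrderAt M1 z₀ := by rw [← add_assoc, hu1]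
    _ < 0 := hsum

/-- Let `(u, M)` and `(u₁, M₁)` be Jost pairs related by coefficient
stripping with `a₁ > 0`, `b₁ ∈ ℝ`.  If `z₀` with `|z₀| > 1` is not a pole of `u₁` and
both `z₀` and `1/z₀` are poles of `M₁`, then `z₀` is a pole of `u`. -/
theorem pole_of_u_of_P2_of_stripped
    (u M u1 M1 : ℂ → ℂ) (h : IsJostPair u M) (h1 : IsJostPair u1 M1)
    (a₁ b₁ : ℝ) (ha₁ : 0 < a₁) (hstrip : StrippingRelation u M u1 M1 a₁ b₁)
    (z₀ : ℂ) (hz₀ : 1 < ‖z₀‖)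
    (hnp : ¬ IsPoleAt u1 z₀) (hp : IsPoleAt M1 z₀) (hp' : IsPoleAt M1 z₀⁻¹) :
    IsPoleAt u z₀ :=
  pole_of_u_of_P2_of_stripped_general u M u1 M1 h h1 a₁ b₁ ha₁ hstrip z₀ hz₀ hp hp'
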